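/- arXiv:math/0503650 — 8 statements merged into one kernel-verified Lean document; each statement's English description precedes it below -/
import Mathlib

section
/- Let p > 0, n ≥ 1, and let g_1,…,g_n be i.i.d. real random variables each with density t ↦ e^{-|t|^p}/(2Γ(1+1/p)). Then ∑_{i=1}^n |g_i|^p has a Gamma(n/p, 1) distribution, i.e. its density on (0,∞) is u ↦ u^{n/p-1} e^{-u}/Γ(n/p). -/
/-!
Each `|g_i|^p` is Gamma(1/p, 1)-distributed: fold the symmetric density onto `(0, ∞)` and
substitute `u = t^p`, using `Γ(1 + 1/p) = Γ(1/p) / p`. Independent Gamma variables with a common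
rate add their shapes, since the convolution of their densities reduces to a Beta integral; so by
induction on `n` the sum is Gamma(n/p, 1).
-/

open MeasureTheory ProbabilityTheory Real Set
open scoped ENNReal

lemma setLIntegral_Ioo_rpow_mul_sub_rpow {a b u : ℝ} (ha : 0 < a) (hb : 0 < b) (hu : 0 < u) :
    ∫⁻ x in Ioo 0 u, ENNReal.ofReal (x ^ (a - 1) * (u - x) ^ (b - 1)) =
      ENNReal.ofReal (u ^ (a + b - 1) * beta a b) := by
  have hB := beta_pos ha hb
  have himage : (u * ·) '' Ioo 0 1 = Ioo 0 u := by
    rw [image_mul_left_Ioo hu, mul_zero, mul_one]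
  rw [← himage, lintegral_image_eq_lintegral_abs_deriv_mul measurableSet_Ioo
      (fun t _ => (hasDerivAt_const_mul u).hasDerivWithinAt)
      (mul_right_injective₀ hu.ne').injOn]
  calc ∫⁻ t in Ioo 0 1,
        ENNReal.ofReal |u| * ENNReal.ofReal ((u * t) ^ (a - 1) * (u - u * t) ^ (b - 1))
      = ∫⁻ t in Ioo 0 1, ENNReal.ofReal (u ^ (a + b - 1) * beta a b) *
          ENNReal.ofReal (1 / beta a b * t ^ (a - 1) * (1 - t) ^ (b - 1)) := by
        refine setLIntegral_congr_fun measurableSet_Ioo fun t ⟨ht0, ht1⟩ => ?_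
        rw [← ENNReal.ofReal_mul (abs_nonneg _), ← ENNReal.ofReal_mul (by positivity)]
        congr 1
        rw [abs_of_pos hu, show u - u * t = u * (1 - t) by ring,
          mul_rpow hu.le ht0.le, mul_rpow hu.le (by linarith),
          show a + b - 1 = 1 + (a - 1) + (b - 1) by ring, rpow_add hu, rpow_add hu, rpow_one]
        field_simp
    _ = ENNReal.ofReal (u ^ (a + b - 1) * beta a b) := by
        rw [lintegral_const_mul _ (by fun_prop), ← lintegral_betaPDF,
          lintegral_betaPDF_eq_one ha hb, mul_one]

lemma measurable_gammaPDF (a r : ℝ) : Measurable (gammaPDF a r) :=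
  (measurable_gammaPDFReal a r).ennreal_ofReal

lemma lconvolution_gammaPDF_eq_setLIntegral (a b r u : ℝ) :
    (gammaPDF a r ⋆ₗ gammaPDF b r) u =
      ∫⁻ x in Icc 0 u, gammaPDF a r x * gammaPDF b r (u - x) := by
  have hvanish : ∀ x ∉ Icc 0 u, gammaPDF a r x * gammaPDF b r (u - x) = 0 := by
    intro x hx
    rcases not_and_or.mp hx with hx | hx
    · rw [gammaPDF_of_neg (not_le.mp hx), zero_mul]
    · rw [gammaPDF_of_neg (x := u - x) (by linarith [not_le.mp hx]), mul_zero]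
  simp_rw [lconvolution_def, neg_add_eq_sub]
  exact (setLIntegral_eq_of_support_subset fun x hx => by_contra fun h => hx (hvanish x h)).symm

lemma gammaPDF_mul_gammaPDF_sub {a b r u x : ℝ} (ha : 0 < a) (hb : 0 < b) (hr : 0 < r)
    (hx : x ∈ Icc 0 u) :
    gammaPDF a r x * gammaPDF b r (u - x) =
      ENNReal.ofReal (r ^ (a + b) * exp (-(r * u)) / (Gamma a * Gamma b)) *
        ENNReal.ofReal (x ^ (a - 1) * (u - x) ^ (b - 1)) := by
  obtain ⟨hx0, hxu⟩ := hx
  have hux : 0 ≤ u - x := sub_nonneg.mpr hxu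
  have := Gamma_pos_of_pos ha
  have := Gamma_pos_of_pos hb
  rw [gammaPDF_of_nonneg hx0, gammaPDF_of_nonneg hux, ← ENNReal.ofReal_mul,
    ← ENNReal.ofReal_mul]
  · congr 1
    rw [rpow_add hr, show -(r * u) = -(r * x) + -(r * (u - x)) by ring, exp_add]
    field_simp
  all_goals positivity

lemma lconvolution_gammaPDF_of_pos {a b r u : ℝ} (ha : 0 < a) (hb : 0 < b) (hr : 0 < r)
    (hu : 0 < u) : (gammaPDF a r ⋆ₗ gammaPDF b r) u = gammaPDF (a + b) r u := by
  rw [lconvolution_gammaPDF_eq_setLIntegral, ← Measure.restrict_congr_set Ioo_ae_eq_Icc,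
    setLIntegral_congr_fun measurableSet_Ioo
      fun x hx => gammaPDF_mul_gammaPDF_sub ha hb hr (Ioo_subset_Icc_self hx),
    lintegral_const_mul _ (by fun_prop), setLIntegral_Ioo_rpow_mul_sub_rpow ha hb hu,
    ← ENNReal.ofReal_mul (by positivity), gammaPDF_of_nonneg hu.le]
  congr 1
  have := Gamma_pos_of_pos ha
  have := Gamma_pos_of_pos hb
  have := Gamma_pos_of_pos (add_pos ha hb)
  rw [beta]
  field_simp

lemma gammaMeasure_conv_gammaMeasure {a b r : ℝ} (ha : 0 < a) (hb : 0 < b) (hr : 0 < r) :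
    gammaMeasure a r ∗ gammaMeasure b r = gammaMeasure (a + b) r := by
  rw [gammaMeasure, gammaMeasure, gammaMeasure,
    conv_withDensity_eq_lconvolution (measurable_gammaPDF a r) (measurable_gammaPDF b r)]
  refine withDensity_congr_ae ?_
  filter_upwards [Measure.ae_ne volume 0] with u hu
  rcases hu.lt_or_gt with hu | hu
  · rw [gammaPDF_of_neg hu, lconvolution_gammaPDF_eq_setLIntegral, Icc_eq_empty (by linarith),
      Measure.restrict_empty, lintegral_zero_measure]
  · exact lconvolution_gammaPDF_of_pos ha hb hr hu

lemma gammaMeasure_one_eq_withDensity (a : ℝ) :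
    gammaMeasure a 1 = volume.withDensity fun u =>
      if 0 < u then ENNReal.ofReal (u ^ (a - 1) * exp (-u) / Gamma a) else 0 := by
  refine withDensity_congr_ae ?_
  filter_upwards [Measure.ae_ne volume 0] with u hu
  rcases hu.lt_or_gt with hu | hu
  · rw [gammaPDF_of_neg hu, if_neg hu.not_gt]
  · rw [gammaPDF_of_nonneg hu.le, if_pos hu, one_rpow, one_mul]
    ring_nf

lemma lintegral_comp_abs (h : ℝ → ℝ≥0∞) (hh : Measurable h) :
    ∫⁻ x, h |x| = 2 * ∫⁻ x in Ioi 0, h x := by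
  have hsplit : (fun x => h |x|) =ᵐ[volume]
      fun x => (Ioi 0).indicator h x + (Ioi 0).indicator h (-x) := by
    filter_upwards [Measure.ae_ne volume 0] with x hx
    rcases hx.lt_or_gt with hx | hx
    · simp [indicator, hx, hx.not_gt, abs_of_neg hx]
    · simp [indicator, hx, hx.not_gt, abs_of_pos hx]
  rw [lintegral_congr_ae hsplit, lintegral_add_left (hh.indicator measurableSet_Ioi),
    lintegral_neg_eq_self, ← two_mul, lintegral_indicator measurableSet_Ioi]

lemma lintegral_comp_rpow_Ioi (g : ℝ → ℝ≥0∞) {q : ℝ} (hq : 0 < q) :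
    ∫⁻ x in Ioi 0, g (x ^ q) =
      ∫⁻ y in Ioi 0, ENNReal.ofReal (q⁻¹ * y ^ (q⁻¹ - 1)) * g y := by
  have hinv : ∀ y ∈ Ioi (0 : ℝ), (y ^ q⁻¹) ^ q = y := fun y hy => by
    rw [← rpow_mul (le_of_lt hy), inv_mul_cancel₀ hq.ne', rpow_one]
  have himage : (· ^ q⁻¹) '' Ioi (0 : ℝ) = Ioi 0 := by
    refine Subset.antisymm (image_subset_iff.mpr fun y hy => rpow_pos_of_pos hy _) fun x hx => ?_
    refine ⟨x ^ q, rpow_pos_of_pos hx _, ?_⟩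
    simp only
    rw [← rpow_mul (le_of_lt hx), mul_inv_cancel₀ hq.ne', rpow_one]
  conv_lhs => rw [← himage]
  rw [lintegral_image_eq_lintegral_abs_deriv_mul measurableSet_Ioi
    (fun y hy => (hasDerivAt_rpow_const (Or.inl (ne_of_gt hy))).hasDerivWithinAt)
    ((rpow_left_injOn (inv_ne_zero hq.ne')).mono Ioi_subset_Ici_self)]
  refine setLIntegral_congr_fun measurableSet_Ioi fun y (hy : 0 < y) => ?_
  rw [hinv y hy, abs_of_pos (by positivity)]

noncomputable def genNormalMeasure (p : ℝ) : Measure ℝ :=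
  volume.withDensity fun t => ENNReal.ofReal (exp (-|t| ^ p) / (2 * Gamma (1 + 1 / p)))

instance (p : ℝ) : SigmaFinite (genNormalMeasure p) :=
  SigmaFinite.withDensity_ofReal _

lemma map_abs_rpow_genNormalMeasure {p : ℝ} (hp : 0 < p) :
    (genNormalMeasure p).map (fun t => |t| ^ p) = gammaMeasure p⁻¹ 1 := by
  refine Measure.ext_of_lintegral _ fun φ hφ => ?_
  set G : ℝ → ℝ≥0∞ := fun u => ENNReal.ofReal (exp (-u) / (2 * Gamma (1 + 1 / p))) * φ u
  rw [lintegral_map hφ (by fun_prop), genNormalMeasure,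
    lintegral_withDensity_eq_lintegral_mul _ (by fun_prop) (by fun_prop), gammaMeasure,
    lintegral_withDensity_eq_lintegral_mul _ (measurable_gammaPDF _ _) hφ]
  calc ∫⁻ t, G (|t| ^ p) = 2 * ∫⁻ t in Ioi 0, G (t ^ p) :=
        lintegral_comp_abs (fun t => G (t ^ p)) (by fun_prop)
    _ = 2 * ∫⁻ u in Ioi 0, ENNReal.ofReal (p⁻¹ * u ^ (p⁻¹ - 1)) * G u := by
        rw [lintegral_comp_rpow_Ioi G hp]
    _ = ∫⁻ u in Ioi 0, gammaPDF p⁻¹ 1 u * φ u := by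
      rw [← lintegral_const_mul' _ _ ENNReal.ofNat_ne_top]
      refine setLIntegral_congr_fun measurableSet_Ioi fun u (hu : 0 < u) => ?_
      have hΓ : Gamma (1 + 1 / p) = p⁻¹ * Gamma p⁻¹ := by
        rw [add_comm, one_div, Gamma_add_one (inv_ne_zero hp.ne')]
      have := Gamma_pos_of_pos (inv_pos.mpr hp)
      rw [gammaPDF_of_nonneg hu.le, ← mul_assoc, ← mul_assoc, ← ENNReal.ofReal_ofNat 2,
        ← ENNReal.ofReal_mul zero_le_two, ← ENNReal.ofReal_mul (by positivity), hΓ]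
      congr 2
      field_simp
      rw [one_rpow]
    _ = ∫⁻ u, gammaPDF p⁻¹ 1 u * φ u := by
      rw [Measure.restrict_congr_set Ioi_ae_eq_Ici]
      refine setLIntegral_eq_of_support_subset fun u hu => mem_Ici.mpr <| not_lt.mp fun hneg => ?_
      exact hu (by simp only [gammaPDF_of_neg hneg, zero_mul])

lemma map_sum_pi_fin_succ {α M : Type*} [MeasurableSpace α] [AddCommMonoid M]
    [MeasurableSpace M] [MeasurableAdd₂ M] (μ : Measure α) [SigmaFinite μ] {f : α → M}
    (hf : Measurable f) (n : ℕ) :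
    (Measure.pi fun _ : Fin (n + 1) => μ).map (fun x => ∑ i, f (x i)) =
      μ.map f ∗ (Measure.pi fun _ : Fin n => μ).map (fun x => ∑ i, f (x i)) := by
  have hsum : ∀ m : ℕ, Measurable fun x : Fin m → α => ∑ i, f (x i) := fun m =>
    Finset.measurable_sum _ fun i _ => hf.comp (measurable_pi_apply i)
  have hsplit := (measurePreserving_piFinSuccAbove (fun _ : Fin (n + 1) => μ) 0).symm
  have hcomp : (fun x : Fin (n + 1) → α => ∑ i, f (x i)) ∘
        (MeasurableEquiv.piFinSuccAbove (fun _ => α) 0).symm =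
      (fun z : M × M => z.1 + z.2) ∘ Prod.map f fun x : Fin n → α => ∑ i, f (x i) := by
    ext ⟨a, x⟩
    simp [Fin.sum_univ_succ]
  rw [← hsplit.map_eq, Measure.map_map (hsum _) hsplit.measurable, hcomp,
    ← Measure.map_map measurable_add (hf.prodMap (hsum n)),
    ← Measure.map_prod_map _ _ hf (hsum n)]
  rfl

lemma map_sum_abs_rpow_pi_genNormalMeasure {p : ℝ} (hp : 0 < p) (n : ℕ) :
    (Measure.pi fun _ : Fin (n + 1) => genNormalMeasure p).map (fun x => ∑ i, |x i| ^ p) =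
      gammaMeasure (((n + 1 : ℕ) : ℝ) / p) 1 := by
  have habs : Measurable fun t : ℝ => |t| ^ p := by fun_prop
  induction n with
  | zero =>
    rw [map_sum_pi_fin_succ _ habs]
    simp only [Finset.univ_eq_empty, Finset.sum_empty, Measure.map_const, Measure.pi_empty_univ,
      one_smul, Measure.conv_dirac_zero]
    rw [map_abs_rpow_genNormalMeasure hp]
    norm_num
  | succ n ih =>
    rw [map_sum_pi_fin_succ _ habs, ih, map_abs_rpow_genNormalMeasure hp,
      gammaMeasure_conv_gammaMeasure (by positivity) (by positivity) one_pos]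
    congr 1
    push_cast
    ring

theorem stmt1 (p : ℝ) (hp : 0 < p) (n : ℕ) (hn : 1 ≤ n) :
    Measure.map (fun x : Fin n → ℝ => ∑ i, |x i| ^ p)
      (Measure.pi fun _ : Fin n => volume.withDensity fun t : ℝ =>
        ENNReal.ofReal (Real.exp (-|t| ^ p) / (2 * Real.Gamma (1 + 1 / p)))) =
    volume.withDensity (fun u : ℝ =>
      if 0 < u then ENNReal.ofReal (u ^ ((n : ℝ) / p - 1) * Real.exp (-u) / Real.Gamma ((n : ℝ) / p))
      else 0) := by
  obtain ⟨m, rfl⟩ : ∃ m, n = m + 1 := ⟨n - 1, by omega⟩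
  rw [← gammaMeasure_one_eq_withDensity, ← map_sum_abs_rpow_pi_genNormalMeasure hp m]
  rfl
end

section
/- Let p ≥ 1, q ≥ 1 and n ≥ 1. Then (1/vol(B_p^n)) ∫_{B_p^n} |x_1|^q dx = Γ(n/p+1) Γ((q+1)/p+1) / [(q+1) Γ(1/p+1) Γ((n+q)/p+1)]. -/
/-!
Slice the ball `B_p^n` along one coordinate: the slice at height `t` is an `ℓ^p` ball of radius
`(1 - |t|^p)^(1/p)` in dimension `n - 1`, of volume `(1 - |t|^p)^((n-1)/p) vol(B_p^(n-1))`.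
This reduces the moment to `∫_{-1}^1 |t|^q (1 - |t|^p)^((n-1)/p) dt`, which the substitution
`u = |t|^p` turns into a Beta integral; the Gamma factors of `vol(B_p^(n-1)) / vol(B_p^n)` then
cancel down to the formula.
-/

open MeasureTheory Set Real
open scoped ENNReal

theorem integral_Ioc_rpow_mul_one_sub_rpow {a b : ℝ} (ha : 0 < a) (hb : 0 < b) :
    ∫ u in Ioc (0 : ℝ) 1, u ^ (a - 1) * (1 - u) ^ (b - 1) =
      Gamma a * Gamma b / Gamma (a + b) := by
  have hbeta : Complex.betaIntegral a b =
      ((∫ u in (0 : ℝ)..1, u ^ (a - 1) * (1 - u) ^ (b - 1) : ℝ) : ℂ) := by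
    rw [Complex.betaIntegral, ← intervalIntegral.integral_ofReal]
    refine intervalIntegral.integral_congr fun u hu => ?_
    rw [uIcc_of_le zero_le_one] at hu
    rw [Complex.ofReal_mul, Complex.ofReal_cpow hu.1, Complex.ofReal_cpow (sub_nonneg.mpr hu.2)]
    push_cast
    rfl
  have hG := Complex.Gamma_mul_Gamma_eq_betaIntegral (s := a) (t := b)
    (by simpa using ha) (by simpa using hb)
  rw [hbeta, ← Complex.ofReal_add, Complex.Gamma_ofReal, Complex.Gamma_ofReal,
    Complex.Gamma_ofReal, ← Complex.ofReal_mul, ← Complex.ofReal_mul, Complex.ofReal_inj] at hG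
  rw [← intervalIntegral.integral_of_le zero_le_one, hG,
    mul_div_cancel_left₀ _ (Gamma_pos_of_pos (add_pos ha hb)).ne']

theorem integral_Icc_comp_abs (g : ℝ → ℝ) (r : ℝ) :
    ∫ t in Icc (-r) r, g |t| = 2 * ∫ t in Ioc 0 r, g t := by
  have hpre : Icc (-r) r = (|·|) ⁻¹' Icc 0 r := by
    ext t
    simp [abs_le]
  rw [← integral_indicator measurableSet_Icc, hpre]
  have hcomp (t : ℝ) :
      ((|·|) ⁻¹' Icc 0 r).indicator (fun t => g |t|) t = (Icc 0 r).indicator g |t| :=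
    indicator_comp_right _
  simp_rw [hcomp]
  rw [integral_comp_abs (f := (Icc 0 r).indicator g), setIntegral_indicator measurableSet_Icc]
  congr 3
  ext t
  simp +contextual [le_of_lt]

theorem image_rpow_Ioc_zero_one {p : ℝ} (hp : 0 < p) : (· ^ p) '' Ioc (0 : ℝ) 1 = Ioc 0 1 := by
  ext u
  constructor
  · rintro ⟨x, ⟨hx0, hx1⟩, rfl⟩
    exact ⟨rpow_pos_of_pos hx0 p, rpow_le_one hx0.le hx1 hp.le⟩
  · rintro ⟨hu0, hu1⟩
    refine ⟨u ^ (1 / p), ⟨rpow_pos_of_pos hu0 _, rpow_le_one hu0.le hu1 (by positivity)⟩,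
      ?_⟩
    simp [← rpow_mul hu0.le, hp.ne']

theorem integral_Ioc_rpow_mul_one_sub_rpow_comp_rpow {p : ℝ} (hp : 0 < p) (q s : ℝ) :
    ∫ t in Ioc (0 : ℝ) 1, t ^ q * (1 - t ^ p) ^ s =
      1 / p * ∫ u in Ioc (0 : ℝ) 1, u ^ ((q + 1) / p - 1) * (1 - u) ^ s := by
  have hsubst := integral_image_eq_integral_abs_deriv_smul measurableSet_Ioc
    (fun x hx => (hasDerivAt_rpow_const (p := p) (Or.inl hx.1.ne')).hasDerivWithinAt)
    ((rpow_left_injOn hp.ne').mono fun (x : ℝ) (hx : x ∈ Ioc 0 1) => hx.1.le)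
    (fun u => u ^ ((q + 1) / p - 1) * (1 - u) ^ s)
  rw [image_rpow_Ioc_zero_one hp] at hsubst
  rw [hsubst, ← integral_const_mul]
  refine setIntegral_congr_fun measurableSet_Ioc fun x hx => ?_
  have hx0 : 0 < x := hx.1
  have hexp : x ^ (p - 1) * x ^ (p * ((q + 1) / p - 1)) = x ^ q := by
    rw [← rpow_add hx0]
    congr 1
    field_simp
    ring
  rw [smul_eq_mul, abs_of_pos (by positivity), ← rpow_mul hx0.le, ← hexp]
  field_simp

theorem integral_Icc_abs_rpow_mul_one_sub_abs_rpow {p q s : ℝ} (hp : 0 < p) (hq : -1 < q)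
    (hs : -1 < s) :
    ∫ t in Icc (-1) 1, |t| ^ q * (1 - |t| ^ p) ^ s =
      2 / p * (Gamma ((q + 1) / p) * Gamma (s + 1) / Gamma ((q + 1) / p + (s + 1))) := by
  rw [integral_Icc_comp_abs (fun t => t ^ q * (1 - t ^ p) ^ s),
    integral_Ioc_rpow_mul_one_sub_rpow_comp_rpow hp, ← add_sub_cancel_right s 1,
    integral_Ioc_rpow_mul_one_sub_rpow (div_pos (by linarith) hp) (by linarith),
    add_sub_cancel_right]
  ring

noncomputable def lpUnitBallVolume (p : ℝ) (m : ℕ) : ℝ :=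
  (2 * Gamma (1 / p + 1)) ^ m / Gamma (m / p + 1)

theorem lpUnitBallVolume_nonneg {p : ℝ} (hp : 0 < p) (m : ℕ) : 0 ≤ lpUnitBallVolume p m := by
  have := Gamma_pos_of_pos (show 0 < 1 / p + 1 by positivity)
  have := Gamma_pos_of_pos (show 0 < m / p + 1 by positivity)
  unfold lpUnitBallVolume
  positivity

theorem volume_sum_rpow_le_of_nonneg (ι : Type*) [Fintype ι] {p c : ℝ} (hp : 1 ≤ p)
    (hc : 0 ≤ c) :
    volume {y : ι → ℝ | ∑ j, |y j| ^ p ≤ c} =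
      ENNReal.ofReal (c ^ (Fintype.card ι / p) * lpUnitBallVolume p (Fintype.card ι)) := by
  have hp0 : 0 < p := by linarith
  cases isEmpty_or_nonempty ι with
  | inl _ => simp [hc, lpUnitBallVolume, volume_pi]
  | inr _ =>
    have hset : {y : ι → ℝ | ∑ j, |y j| ^ p ≤ c} =
        {y : ι → ℝ | (∑ j, |y j| ^ p) ^ (1 / p) ≤ c ^ (1 / p)} := by
      ext y
      exact (rpow_le_rpow_iff (by positivity) hc (by positivity)).symm
    rw [hset, volume_sum_rpow_le _ hp, ← ENNReal.ofReal_pow (by positivity),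
      ← ENNReal.ofReal_mul (by positivity), ← rpow_natCast, ← rpow_mul hc,
      one_div_mul_eq_div, lpUnitBallVolume]

theorem setOf_sum_rpow_le_eq_empty_of_neg (ι : Type*) [Fintype ι] {p c : ℝ} (hc : c < 0) :
    {y : ι → ℝ | ∑ j, |y j| ^ p ≤ c} = ∅ :=
  eq_empty_of_forall_notMem fun y hy => hc.not_ge (hy.trans' (by positivity))

theorem lintegral_sum_rpow_le_comp_apply {p c : ℝ} {m : ℕ} (i : Fin (m + 1))
    {f : ℝ → ℝ≥0∞} (hf : Measurable f) :
    ∫⁻ x in {x : Fin (m + 1) → ℝ | ∑ j, |x j| ^ p ≤ c}, f (x i) =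
      ∫⁻ t, f t * volume {y : Fin m → ℝ | ∑ j, |y j| ^ p ≤ c - |t| ^ p} := by
  set T : Set (ℝ × (Fin m → ℝ)) := {z | ∑ j, |z.2 j| ^ p ≤ c - |z.1| ^ p}
  have hT : MeasurableSet T := measurableSet_le (by fun_prop) (by fun_prop)
  have he := volume_preserving_piFinSuccAbove (fun _ : Fin (m + 1) => ℝ) i
  have hpre : {x : Fin (m + 1) → ℝ | ∑ j, |x j| ^ p ≤ c} =
      MeasurableEquiv.piFinSuccAbove (fun _ => ℝ) i ⁻¹' T := by
    ext x
    simp only [mem_ofPred_eq, mem_preimage, T, MeasurableEquiv.piFinSuccAbove_apply,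
      Fin.insertNthEquiv_symm_apply, Fin.removeNth, Fin.sum_univ_succAbove _ i]
    constructor <;> intro h <;> linarith
  rw [hpre]
  refine (he.setLIntegral_comp_preimage hT (f := fun z => f z.1) (hf.comp measurable_fst)).trans
    ?_
  rw [Measure.volume_eq_prod, ← lintegral_indicator hT,
    lintegral_prod _ ((hf.comp measurable_fst).indicator hT (f := fun b => f b.1)).aemeasurable]
  congr 1 with t
  exact lintegral_indicator_const (measurableSet_le (by fun_prop) (by fun_prop)) (f t)

theorem integral_sum_rpow_le_one_comp_apply {p : ℝ} (hp : 1 ≤ p) {m : ℕ} (i : Fin (m + 1))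
    {g : ℝ → ℝ} (hg : Measurable g) (hg0 : ∀ t, 0 ≤ g t) :
    ∫ x in {x : Fin (m + 1) → ℝ | ∑ j, |x j| ^ p ≤ 1}, g (x i) =
      (∫ t in Icc (-1) 1, g t * (1 - |t| ^ p) ^ ((m : ℝ) / p)) * lpUnitBallVolume p m := by
  have hp0 : 0 < p := by linarith
  have hslice (t : ℝ) :
      ENNReal.ofReal (g t) * volume {y : Fin m → ℝ | ∑ j, |y j| ^ p ≤ 1 - |t| ^ p} =
        (Icc (-1) 1).indicator
          (fun t => ENNReal.ofReal (g t * (1 - |t| ^ p) ^ ((m : ℝ) / p) * lpUnitBallVolume p m))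
          t := by
    by_cases ht : |t| ≤ 1
    · have hc : 0 ≤ 1 - |t| ^ p := sub_nonneg.mpr (rpow_le_one (abs_nonneg t) ht hp0.le)
      rw [indicator_of_mem (mem_Icc.mpr (abs_le.mp ht)), volume_sum_rpow_le_of_nonneg _ hp hc,
        Fintype.card_fin, ← ENNReal.ofReal_mul (hg0 t), mul_assoc]
    · have hc : 1 - |t| ^ p < 0 := sub_neg.mpr (one_lt_rpow (not_le.mp ht) hp0)
      rw [indicator_of_notMem (fun h => ht (abs_le.mpr (mem_Icc.mp h))),
        setOf_sum_rpow_le_eq_empty_of_neg _ hc, measure_empty, mul_zero]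
  rw [integral_eq_lintegral_of_nonneg_ae (ae_of_all _ fun x => hg0 _)
      (hg.comp (measurable_pi_apply i)).aestronglyMeasurable,
    lintegral_sum_rpow_le_comp_apply i hg.ennreal_ofReal, ← integral_mul_const]
  simp_rw [hslice]
  rw [lintegral_indicator measurableSet_Icc, ← integral_eq_lintegral_of_nonneg_ae]
  · filter_upwards [ae_restrict_mem measurableSet_Icc] with t ht
    have hc : 0 ≤ 1 - |t| ^ p :=
      sub_nonneg.mpr (rpow_le_one (abs_nonneg t) (abs_le.mpr ht) hp0.le)
    have := lpUnitBallVolume_nonneg hp0 m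
    have := hg0 t
    positivity
  · exact (by fun_prop : Measurable _).aestronglyMeasurable

theorem stmt3 (p q : ℝ) (hp : 1 ≤ p) (hq : 1 ≤ q) (n : ℕ) (hn : 0 < n) :
    (∫ x in {x : Fin n → ℝ | ∑ i, |x i| ^ p ≤ 1}, |x ⟨0, hn⟩| ^ q) /
      (volume {x : Fin n → ℝ | ∑ i, |x i| ^ p ≤ 1}).toReal =
    Real.Gamma ((n : ℝ) / p + 1) * Real.Gamma ((q + 1) / p + 1) /
      ((q + 1) * Real.Gamma (1 / p + 1) * Real.Gamma (((n : ℝ) + q) / p + 1)) := by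
  obtain ⟨m, rfl⟩ : ∃ m, n = m + 1 := ⟨n - 1, by omega⟩
  have hp0 : 0 < p := by linarith
  have ha : 0 < (q + 1) / p := by positivity
  have hvol : (volume {x : Fin (m + 1) → ℝ | ∑ i, |x i| ^ p ≤ 1}).toReal =
      lpUnitBallVolume p (m + 1) := by
    rw [volume_sum_rpow_le_of_nonneg _ hp zero_le_one, one_rpow, one_mul, Fintype.card_fin,
      ENNReal.toReal_ofReal (lpUnitBallVolume_nonneg hp0 _)]
  rw [hvol, integral_sum_rpow_le_one_comp_apply hp _ (g := fun t => |t| ^ q) (by fun_prop)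
      (fun t => by positivity),
    integral_Icc_abs_rpow_mul_one_sub_abs_rpow hp0 (by linarith)
      (by linarith [show (0 : ℝ) ≤ m / p by positivity]),
    Gamma_add_one ha.ne', show (q + 1) / p + (m / p + 1) = ((↑(m + 1) : ℝ) + q) / p + 1 by
      push_cast; field_simp; ring]
  have := Gamma_pos_of_pos (show 0 < 1 / p + 1 by positivity)
  have := Gamma_pos_of_pos (show 0 < (m : ℝ) / p + 1 by positivity)
  have := Gamma_pos_of_pos (show 0 < ((m + 1 : ℕ) : ℝ) / p + 1 by positivity)
  have := Gamma_pos_of_pos (show 0 < (((m + 1 : ℕ) : ℝ) + q) / p + 1 by positivity)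
  have := Gamma_pos_of_pos ha
  simp only [lpUnitBallVolume]
  field_simp
  ring
end

section
/- Let p ≥ 1. The function f(t) = ∫_t^∞ e^{-u^p} du is log-concave on (0,∞), i.e. f''(t) f(t) − f'(t)^2 ≤ 0 for all t > 0 (equivalently, log f is concave). -/
/-!
The derivative of `log f` is `-e^{-t^p} / f(t)`, whose own derivative has the sign of
`p t^{p-1} f(t) - e^{-t^p}`. This is `≤ 0` because `p t^{p-1} ≤ p u^{p-1}` for `u ≥ t` when
`p ≥ 1`, and `∫_t^∞ p u^{p-1} e^{-u^p} du = e^{-t^p}`.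
-/

open Real MeasureTheory Set Filter Topology

theorem hasDerivAt_integral_Ioi {E : Type*} [NormedAddCommGroup E] [NormedSpace ℝ E]
    [CompleteSpace E] {f : ℝ → E} {a t : ℝ} (hf : IntegrableOn f (Ioi a)) (hat : a < t)
    (hft : ContinuousAt f t) :
    HasDerivAt (fun x => ∫ u in Ioi x, f u) (-f t) t := by
  have hprim : HasDerivAt (fun x => ∫ u in a..x, f u) (f t) t :=
    intervalIntegral.integral_hasDerivAt_right
      ((intervalIntegrable_iff_integrableOn_Ioc_of_le hat.le).2 (hf.mono_set Ioc_subset_Ioi_self))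
      (AEStronglyMeasurable.stronglyMeasurableAtFilter_of_mem hf.1 (Ioi_mem_nhds hat)) hft
  refine (hprim.const_sub (∫ u in Ioi a, f u)).congr_of_eventuallyEq ?_
  filter_upwards [Ioi_mem_nhds hat] with x hx
  rw [← intervalIntegral.integral_Ioi_sub_Ioi hf (le_of_lt hx), sub_sub_cancel]

noncomputable def expNegRpowTail (p t : ℝ) : ℝ := ∫ u in Ioi t, exp (-u ^ p)

section

variable {p t : ℝ}

theorem hasDerivAt_exp_neg_rpow (ht : t ≠ 0) :
    HasDerivAt (fun u => exp (-u ^ p)) (-(p * t ^ (p - 1) * exp (-t ^ p))) t :=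
  (hasDerivAt_rpow_const (Or.inl ht)).fun_neg.exp.congr_deriv (by ring)

theorem integrableOn_exp_neg_rpow_Ioi (hp : 0 < p) (ht : 0 ≤ t) :
    IntegrableOn (fun u => exp (-u ^ p)) (Ioi t) := by
  simpa using (integrableOn_rpow_mul_exp_neg_rpow (s := 0) (by norm_num) hp).mono_set
    (Ioi_subset_Ioi ht)

theorem integrableOn_mul_rpow_mul_exp_neg_rpow_Ioi (hp : 0 < p) (ht : 0 ≤ t) :
    IntegrableOn (fun u => p * u ^ (p - 1) * exp (-u ^ p)) (Ioi t) := by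
  have h := (integrableOn_rpow_mul_exp_neg_rpow (s := p - 1) (by linarith) hp).const_mul p
  simpa only [mul_assoc] using IntegrableOn.mono_set h (Ioi_subset_Ioi ht)

theorem integral_Ioi_mul_rpow_mul_exp_neg_rpow (hp : 0 < p) (ht : 0 ≤ t) :
    ∫ u in Ioi t, p * u ^ (p - 1) * exp (-u ^ p) = exp (-t ^ p) := by
  have hderiv : ∀ u ∈ Ioi t,
      HasDerivAt (fun u => -exp (-u ^ p)) (p * u ^ (p - 1) * exp (-u ^ p)) u := fun u hu =>
    (hasDerivAt_exp_neg_rpow (ht.trans_lt hu).ne').fun_neg.congr_deriv (neg_neg _)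
  have hcont : ContinuousWithinAt (fun u => -exp (-u ^ p)) (Ici t) t :=
    (continuousAt_rpow_const t p (Or.inr hp.le)).neg.rexp.neg.continuousWithinAt
  have hlim : Tendsto (fun u => -exp (-u ^ p)) atTop (𝓝 0) := by
    simpa using (tendsto_exp_atBot.comp (tendsto_neg_atTop_atBot.comp (tendsto_rpow_atTop hp))).neg
  rw [integral_Ioi_of_hasDerivAt_of_tendsto hcont hderiv
    (integrableOn_mul_rpow_mul_exp_neg_rpow_Ioi hp ht) hlim, zero_sub, neg_neg]

theorem expNegRpowTail_pos (hp : 0 < p) (ht : 0 ≤ t) : 0 < expNegRpowTail p t := by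
  rw [expNegRpowTail, setIntegral_pos_iff_support_of_nonneg_ae
    (ae_of_all _ fun u => (exp_pos _).le) (integrableOn_exp_neg_rpow_Ioi hp ht)]
  simp [Function.support, exp_ne_zero]

theorem mul_rpow_mul_expNegRpowTail_le (hp : 1 ≤ p) (ht : 0 ≤ t) :
    p * t ^ (p - 1) * expNegRpowTail p t ≤ exp (-t ^ p) := by
  have hp₀ : 0 < p := by linarith
  rw [expNegRpowTail, ← integral_const_mul, ← integral_Ioi_mul_rpow_mul_exp_neg_rpow hp₀ ht]
  refine setIntegral_mono_on ((integrableOn_exp_neg_rpow_Ioi hp₀ ht).const_mul _)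
    (integrableOn_mul_rpow_mul_exp_neg_rpow_Ioi hp₀ ht) measurableSet_Ioi fun u hu => ?_
  gcongr
  exact le_of_lt hu

theorem hasDerivAt_expNegRpowTail (hp : 0 < p) (ht : 0 < t) :
    HasDerivAt (expNegRpowTail p) (-exp (-t ^ p)) t :=
  hasDerivAt_integral_Ioi (integrableOn_exp_neg_rpow_Ioi hp le_rfl) ht
    (continuousAt_rpow_const t p (Or.inl ht.ne')).neg.rexp

theorem hasDerivAt_log_expNegRpowTail (hp : 0 < p) (ht : 0 < t) :
    HasDerivAt (fun x => log (expNegRpowTail p x)) (-exp (-t ^ p) / expNegRpowTail p t) t :=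
  (hasDerivAt_expNegRpowTail hp ht).log (expNegRpowTail_pos hp ht.le).ne'

theorem hasDerivAt_neg_exp_neg_rpow_div_expNegRpowTail (hp : 0 < p) (ht : 0 < t) :
    HasDerivAt (fun x => -exp (-x ^ p) / expNegRpowTail p x)
      ((p * t ^ (p - 1) * expNegRpowTail p t * exp (-t ^ p) - exp (-t ^ p) ^ 2) /
        expNegRpowTail p t ^ 2) t :=
  ((hasDerivAt_exp_neg_rpow ht.ne').fun_neg.div (hasDerivAt_expNegRpowTail hp ht)
    (expNegRpowTail_pos hp ht.le).ne').congr_deriv (by ring)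

end

theorem stmt6 (p : ℝ) (hp : 1 ≤ p) :
    ConcaveOn ℝ (Set.Ioi 0)
      (fun t : ℝ => Real.log (∫ u in Set.Ioi t, Real.exp (-u ^ p))) := by
  have hp₀ : 0 < p := by linarith
  change ConcaveOn ℝ (Ioi 0) fun t => log (expNegRpowTail p t)
  refine concaveOn_of_hasDerivWithinAt2_nonpos (convex_Ioi 0)
    (f' := fun t => -exp (-t ^ p) / expNegRpowTail p t)
    (f'' := fun t => (p * t ^ (p - 1) * expNegRpowTail p t * exp (-t ^ p) - exp (-t ^ p) ^ 2) /
      expNegRpowTail p t ^ 2)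
    (fun t ht => (hasDerivAt_log_expNegRpowTail hp₀ ht).continuousAt.continuousWithinAt)
    (fun t ht => ?_) (fun t ht => ?_) (fun t ht => ?_) <;>
    simp only [interior_Ioi, mem_Ioi] at ht ⊢
  · exact (hasDerivAt_log_expNegRpowTail hp₀ ht).hasDerivWithinAt
  · exact (hasDerivAt_neg_exp_neg_rpow_div_expNegRpowTail hp₀ ht).hasDerivWithinAt
  · refine div_nonpos_of_nonpos_of_nonneg ?_ (sq_nonneg _)
    rw [sq, ← sub_mul]
    exact mul_nonpos_of_nonpos_of_nonneg
      (sub_nonpos.2 (mul_rpow_mul_expNegRpowTail_le hp ht.le)) (exp_pos _).le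
end

section
/- Let c : [0,∞) → [0,∞) be nondecreasing and concave. Then the function f(t) := t · c(1/√t), defined for t > 0, is concave on (0,∞). -/
/-!
Writing `1 / √t = √t / t`, the function is `t ↦ t * c (h t / t)` with `h = √`. The perspective
`(x, t) ↦ t * c (x / t)` of a concave `c` is jointly concave, so composing it with the concave
curve `t ↦ (h t, t)` gives a concave function, because `c` is nondecreasing.
-/

open Set

theorem ConcaveOn.perspective_le {c : ℝ → ℝ} (hc : ConcaveOn ℝ (Ici 0) c) {x y t s a b : ℝ}
    (hx : 0 ≤ x) (hy : 0 ≤ y) (ht : 0 < t) (hs : 0 < s) (ha : 0 ≤ a) (hb : 0 ≤ b)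
    (hab : a + b = 1) :
    a * (t * c (x / t)) + b * (s * c (y / s)) ≤
      (a * t + b * s) * c ((a * x + b * y) / (a * t + b * s)) := by
  have hu : 0 < a * t + b * s := convex_Ioi (0 : ℝ) ht hs ha hb hab
  -- the weights `a t / u`, `b s / u` turn `x / t`, `y / s` into `(a x + b y) / u`
  have hwsum : a * t / (a * t + b * s) + b * s / (a * t + b * s) = 1 := by
    rw [← add_div, div_self hu.ne']
  have hconc := hc.2 (mem_Ici.2 (div_nonneg hx ht.le)) (mem_Ici.2 (div_nonneg hy hs.le))
    (by positivity) (by positivity) hwsum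
  have harg : a * t / (a * t + b * s) * (x / t) + b * s / (a * t + b * s) * (y / s) =
      (a * x + b * y) / (a * t + b * s) := by
    field_simp
  simp only [smul_eq_mul, harg] at hconc
  calc a * (t * c (x / t)) + b * (s * c (y / s))
      = (a * t + b * s) * (a * t / (a * t + b * s) * c (x / t)
          + b * s / (a * t + b * s) * c (y / s)) := by
        field_simp
    _ ≤ (a * t + b * s) * c ((a * x + b * y) / (a * t + b * s)) := by gcongr

theorem ConcaveOn.mul_comp_div {c h : ℝ → ℝ} (hc : ConcaveOn ℝ (Ici 0) c)
    (hmono : MonotoneOn c (Ici 0)) (hh : ConcaveOn ℝ (Ioi 0) h) (hh0 : ∀ t ∈ Ioi 0, 0 ≤ h t) :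
    ConcaveOn ℝ (Ioi 0) (fun t => t * c (h t / t)) := by
  refine ⟨convex_Ioi 0, fun t ht s hs a b ha hb hab => ?_⟩
  have hu : 0 < a * t + b * s := convex_Ioi (0 : ℝ) ht hs ha hb hab
  have hh_le : a * h t + b * h s ≤ h (a * t + b * s) := hh.2 ht hs ha hb hab
  have hcomb : 0 ≤ a * h t + b * h s := by
    have := hh0 t ht; have := hh0 s hs; positivity
  calc a • (t * c (h t / t)) + b • (s * c (h s / s))
      ≤ (a * t + b * s) * c ((a * h t + b * h s) / (a * t + b * s)) :=
        hc.perspective_le (hh0 t ht) (hh0 s hs) ht hs ha hb hab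
    _ ≤ (a * t + b * s) * c (h (a * t + b * s) / (a * t + b * s)) := by
        gcongr
        exact hmono (mem_Ici.2 (div_nonneg hcomb hu.le)) (mem_Ici.2 (div_nonneg (hh0 _ hu) hu.le))
          (by gcongr)
    _ = (a • t + b • s) * c (h (a • t + b • s) / (a • t + b • s)) := rfl

theorem stmt8_general (c : ℝ → ℝ) (hmono : MonotoneOn c (Set.Ici 0))
    (hconc : ConcaveOn ℝ (Set.Ici 0) c) :
    ConcaveOn ℝ (Set.Ioi 0) (fun t : ℝ => t * c (1 / Real.sqrt t)) := by
  have h := hconc.mul_comp_div hmono (Real.strictConcaveOn_sqrt.concaveOn.subset Ioi_subset_Ici_self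
    (convex_Ioi 0)) fun t _ => Real.sqrt_nonneg t
  simpa only [Real.sqrt_div_self'] using h

theorem stmt8 (c : ℝ → ℝ) (hmono : MonotoneOn c (Set.Ici 0))
    (hconc : ConcaveOn ℝ (Set.Ici 0) c) (hnn : ∀ x ∈ Set.Ici (0 : ℝ), 0 ≤ c x) :
    ConcaveOn ℝ (Set.Ioi 0) (fun t : ℝ => t * c (1 / Real.sqrt t)) :=
  stmt8_general c hmono hconc
end

section
/- Fix 1 < p ≤ 2 and integers 1 ≤ q ≤ n. For every a = (a_1,…,a_n) with a_1 ≥ a_2 ≥ ⋯ ≥ a_n ≥ 0 and ∑ a_i^2 = 1, one has q^{1/p} (∑_{i ≤ q} a_i^{p/(p-1)})^{(p-1)/p} + √q (∑_{i > q} a_i^2)^{1/2} ≤ √2 · q^{1/p}. -/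
/-!
Write `A = ∑_{i<q} a_i²` and `B = ∑_{i≥q} a_i²`. Since `p / (p - 1) ≥ 2`, the `ℓ^{p/(p-1)}` norm
of the head `(a_i)_{i<q}` is at most its `ℓ²` norm `√A`, and since `p ≤ 2`, `√q ≤ q^{1/p}`.
The left-hand side is therefore at most `q^{1/p} (√A + √B)`, and with `A + B = 1`, `√A + √B ≤ √(2 (A + B)) = √2`.
-/

open Finset

namespace Real

lemma sum_rpow_le_rpow_sum {ι : Type*} (s : Finset ι) {x : ι → ℝ} (hx : ∀ i ∈ s, 0 ≤ x i)
    {r : ℝ} (hr : 1 ≤ r) : ∑ i ∈ s, x i ^ r ≤ (∑ i ∈ s, x i) ^ r := by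
  classical
  induction s using Finset.induction_on with
  | empty => simp [zero_rpow (by linarith : r ≠ 0)]
  | insert i s hi ih =>
    rw [forall_mem_insert] at hx
    rw [sum_insert hi, sum_insert hi]
    calc x i ^ r + ∑ j ∈ s, x j ^ r ≤ x i ^ r + (∑ j ∈ s, x j) ^ r := by gcongr; exact ih hx.2
      _ ≤ (x i + ∑ j ∈ s, x j) ^ r := add_rpow_le_rpow_add hx.1 (sum_nonneg hx.2) hr

lemma rpow_sum_rpow_inv_le_sqrt_sum_sq {ι : Type*} (s : Finset ι) {x : ι → ℝ}
    (hx : ∀ i ∈ s, 0 ≤ x i) {r : ℝ} (hr : 2 ≤ r) :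
    (∑ i ∈ s, x i ^ r) ^ r⁻¹ ≤ √(∑ i ∈ s, x i ^ 2) := by
  have hsq : ∀ i ∈ s, x i ^ r = (x i ^ 2) ^ (r / 2) := fun i hi => by
    rw [← rpow_natCast, ← rpow_mul (hx i hi)]
    ring_nf
  have hsum : ∑ i ∈ s, x i ^ r ≤ (∑ i ∈ s, x i ^ 2) ^ (r / 2) := by
    rw [sum_congr rfl hsq]
    exact sum_rpow_le_rpow_sum s (fun i _ => sq_nonneg (x i)) (by linarith)
  calc (∑ i ∈ s, x i ^ r) ^ r⁻¹ ≤ ((∑ i ∈ s, x i ^ 2) ^ (r / 2)) ^ r⁻¹ := by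
        gcongr
        exact sum_nonneg fun i hi => rpow_nonneg (hx i hi) r
    _ = √(∑ i ∈ s, x i ^ 2) := by
        rw [← rpow_mul (sum_nonneg fun i _ => sq_nonneg (x i)), sqrt_eq_rpow]
        field_simp

lemma sqrt_add_sqrt_le_sqrt_two_mul {x y : ℝ} (hx : 0 ≤ x) (hy : 0 ≤ y) :
    √x + √y ≤ √(2 * (x + y)) := by
  apply le_sqrt_of_sq_le
  nlinarith [sq_sqrt hx, sq_sqrt hy, sq_nonneg (√x - √y)]

lemma sqrt_le_rpow_inv {x p : ℝ} (hx : 1 ≤ x) (hp0 : 0 < p) (hp2 : p ≤ 2) :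
    √x ≤ x ^ p⁻¹ := by
  rw [sqrt_eq_rpow, one_div]
  exact rpow_le_rpow_of_exponent_le hx (inv_anti₀ hp0 hp2)

end Real

theorem stmt14_general (p : ℝ) (hp1 : 1 < p) (hp2 : p ≤ 2) (n q : ℕ) (hq : 1 ≤ q)
    (a : Fin n → ℝ) (hnn : ∀ i, 0 ≤ a i)
    (hnorm : ∑ i, a i ^ 2 = 1) :
    (q : ℝ) ^ (1 / p) *
        (∑ i ∈ Finset.univ.filter (fun i : Fin n => (i : ℕ) < q), a i ^ (p / (p - 1)))
          ^ ((p - 1) / p)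
      + Real.sqrt q *
        Real.sqrt (∑ i ∈ Finset.univ.filter (fun i : Fin n => q ≤ (i : ℕ)), a i ^ 2)
    ≤ Real.sqrt 2 * (q : ℝ) ^ (1 / p) := by
  set A := ∑ i ∈ univ.filter (fun i : Fin n => (i : ℕ) < q), a i ^ 2
  set B := ∑ i ∈ univ.filter (fun i : Fin n => q ≤ (i : ℕ)), a i ^ 2
  have hAB : A + B = 1 := by
    rw [← hnorm, ← sum_filter_add_sum_filter_not univ (fun i : Fin n => (i : ℕ) < q)]
    simp only [A, B, not_lt]
  have hhead : (∑ i ∈ univ.filter (fun i : Fin n => (i : ℕ) < q), a i ^ (p / (p - 1)))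
      ^ ((p - 1) / p) ≤ √A := by
    rw [show (p - 1) / p = (p / (p - 1))⁻¹ from (inv_div _ _).symm]
    refine Real.rpow_sum_rpow_inv_le_sqrt_sum_sq _ (fun i _ => hnn i) ?_
    rw [le_div_iff₀ (by linarith)]
    linarith
  have hq' : √(q : ℝ) ≤ (q : ℝ) ^ (1 / p) := by
    rw [one_div]
    exact Real.sqrt_le_rpow_inv (by exact_mod_cast hq) (by linarith) hp2
  have htwo : √A + √B ≤ √2 := by
    simpa [hAB] using Real.sqrt_add_sqrt_le_sqrt_two_mul (x := A) (y := B)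
      (sum_nonneg fun i _ => sq_nonneg _) (sum_nonneg fun i _ => sq_nonneg _)
  calc _ ≤ (q : ℝ) ^ (1 / p) * √A + (q : ℝ) ^ (1 / p) * √B := by gcongr
    _ = (q : ℝ) ^ (1 / p) * (√A + √B) := by ring
    _ ≤ √2 * (q : ℝ) ^ (1 / p) := by rw [mul_comm]; gcongr

theorem stmt14 (p : ℝ) (hp1 : 1 < p) (hp2 : p ≤ 2) (n q : ℕ) (hq : 1 ≤ q) (hqn : q ≤ n)
    (a : Fin n → ℝ) (hmono : ∀ i j : Fin n, i ≤ j → a j ≤ a i) (hnn : ∀ i, 0 ≤ a i)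
    (hnorm : ∑ i, a i ^ 2 = 1) :
    (q : ℝ) ^ (1 / p) *
        (∑ i ∈ Finset.univ.filter (fun i : Fin n => (i : ℕ) < q), a i ^ (p / (p - 1)))
          ^ ((p - 1) / p)
      + Real.sqrt q *
        Real.sqrt (∑ i ∈ Finset.univ.filter (fun i : Fin n => q ≤ (i : ℕ)), a i ^ 2)
    ≤ Real.sqrt 2 * (q : ℝ) ^ (1 / p) :=
  stmt14_general p hp1 hp2 n q hq a hnn hnorm
end

section
/- Fix 2 < p < ∞ and integers 1 ≤ q ≤ n. For every a = (a_1,…,a_n) with a_1 ≥ ⋯ ≥ a_n ≥ 0 and ∑ a_i^2 = 1, one has q^{1/p} ≤ q^{1/p} (∑_{i ≤ q} a_i^{p/(p-1)})^{(p-1)/p} + √q (∑_{i > q} a_i^2)^{1/2} ≤ √(2q) · (n/q)^{1/2 - 1/p}. -/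
/-!
With `r = p / (p - 1) ≤ 2`, write `u` and `v` for the `ℓ²` norms of the head `(aᵢ)_{i<q}` and
the tail `(aᵢ)_{i≥q}`, so that `u² + v² = 1` and hence `1 ≤ u + v ≤ √2`. Comparing the `ℓʳ` and
`ℓ²` norms on the `q` head coordinates puts the `ℓʳ` norm of the head between `u` and
`q^(1/r - 1/2) u = q^(1/2 - 1/p) u`. The middle expression is therefore at least
`q^(1/p) (u + v) ≥ q^(1/p)` and at most `√q (u + v) ≤ √(2q)`.
-/

open Finset Real

namespace Real

variable {ι : Type*} (s : Finset ι) {f : ι → ℝ}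

theorem rpow_sum_le_sum_rpow (hf : ∀ i ∈ s, 0 ≤ f i) {e : ℝ} (he0 : 0 < e) (he1 : e ≤ 1) :
    (∑ i ∈ s, f i) ^ e ≤ ∑ i ∈ s, f i ^ e := by
  induction s using Finset.cons_induction with
  | empty => simp [zero_rpow he0.ne']
  | cons j s hj ih =>
    rw [sum_cons, sum_cons]
    have hs := fun i hi => hf i (mem_cons_of_mem hi)
    calc (f j + ∑ i ∈ s, f i) ^ e ≤ f j ^ e + (∑ i ∈ s, f i) ^ e :=
          rpow_add_le_add_rpow (hf j (mem_cons_self _ _)) (sum_nonneg hs) he0.le he1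
      _ ≤ f j ^ e + ∑ i ∈ s, f i ^ e := by gcongr; exact ih hs

theorem Lq_le_Lp_of_le (hf : ∀ i ∈ s, 0 ≤ f i) {p q : ℝ} (hp : 0 < p) (hpq : p ≤ q) :
    (∑ i ∈ s, f i ^ q) ^ (1 / q) ≤ (∑ i ∈ s, f i ^ p) ^ (1 / p) := by
  have hq : 0 < q := hp.trans_le hpq
  have hsum : (∑ i ∈ s, f i ^ q) ^ (p / q) ≤ ∑ i ∈ s, f i ^ p := by
    refine (rpow_sum_le_sum_rpow s (fun i hi => rpow_nonneg (hf i hi) q) (by positivity)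
      ((div_le_one hq).2 hpq)).trans_eq (sum_congr rfl fun i hi => ?_)
    rw [← rpow_mul (hf i hi), mul_div_cancel₀ p hq.ne']
  calc (∑ i ∈ s, f i ^ q) ^ (1 / q) = ((∑ i ∈ s, f i ^ q) ^ (p / q)) ^ (1 / p) := by
        rw [← rpow_mul (sum_nonneg fun i hi => rpow_nonneg (hf i hi) q)]
        congr 1
        field_simp
    _ ≤ (∑ i ∈ s, f i ^ p) ^ (1 / p) :=
        rpow_le_rpow (rpow_nonneg (sum_nonneg fun i hi => rpow_nonneg (hf i hi) q) _) hsum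
          (by positivity)

theorem Lp_le_card_rpow_mul_Lq (hf : ∀ i ∈ s, 0 ≤ f i) {p q : ℝ} (hp : 0 < p) (hpq : p ≤ q) :
    (∑ i ∈ s, f i ^ p) ^ (1 / p) ≤ (#s : ℝ) ^ (1 / p - 1 / q) * (∑ i ∈ s, f i ^ q) ^ (1 / q) := by
  have hq : 0 < q := hp.trans_le hpq
  have hfp : ∀ i ∈ s, 0 ≤ f i ^ p := fun i hi => rpow_nonneg (hf i hi) p
  have hpow : (∑ i ∈ s, f i ^ p) ^ (q / p) ≤ (#s : ℝ) ^ (q / p - 1) * ∑ i ∈ s, f i ^ q := by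
    refine (rpow_sum_le_const_mul_sum_rpow_of_nonneg s ((one_le_div hp).2 hpq) hfp).trans_eq ?_
    congr 1
    refine sum_congr rfl fun i hi => ?_
    rw [← rpow_mul (hf i hi), mul_div_cancel₀ q hp.ne']
  calc (∑ i ∈ s, f i ^ p) ^ (1 / p) = ((∑ i ∈ s, f i ^ p) ^ (q / p)) ^ (1 / q) := by
        rw [← rpow_mul (sum_nonneg hfp)]
        congr 1
        field_simp
    _ ≤ ((#s : ℝ) ^ (q / p - 1) * ∑ i ∈ s, f i ^ q) ^ (1 / q) :=
        rpow_le_rpow (rpow_nonneg (sum_nonneg hfp) _) hpow (by positivity)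
    _ = (#s : ℝ) ^ (1 / p - 1 / q) * (∑ i ∈ s, f i ^ q) ^ (1 / q) := by
        rw [mul_rpow (by positivity) (sum_nonneg fun i hi => rpow_nonneg (hf i hi) q),
          ← rpow_mul (Nat.cast_nonneg _)]
        congr 2
        field_simp

end Real

theorem one_le_add_le_sqrt_two {u v : ℝ} (hu : 0 ≤ u) (hv : 0 ≤ v) (huv : u ^ 2 + v ^ 2 = 1) :
    1 ≤ u + v ∧ u + v ≤ √2 := by
  refine ⟨?_, le_sqrt_of_sq_le (by nlinarith [sq_nonneg (u - v)])⟩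
  nlinarith [mul_nonneg hu hv]

theorem rpow_mul_add_sqrt_mul_bounds {p q u v t : ℝ} (hp : 2 ≤ p) (hq : 1 ≤ q) (hu : 0 ≤ u)
    (hv : 0 ≤ v) (huv : u ^ 2 + v ^ 2 = 1) (hut : u ≤ t) (htu : t ≤ q ^ (1 / 2 - 1 / p) * u) :
    q ^ (1 / p) ≤ q ^ (1 / p) * t + √q * v ∧ q ^ (1 / p) * t + √q * v ≤ √(2 * q) := by
  obtain ⟨hsum_ge, hsum_le⟩ := one_le_add_le_sqrt_two hu hv huv
  have hq0 : 0 ≤ q ^ (1 / p) := by positivity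
  have hqp : q ^ (1 / p) ≤ √q := by
    rw [sqrt_eq_rpow]
    exact rpow_le_rpow_of_exponent_le hq (by gcongr)
  constructor
  · calc q ^ (1 / p) ≤ q ^ (1 / p) * (u + v) := le_mul_of_one_le_right hq0 hsum_ge
      _ ≤ q ^ (1 / p) * t + √q * v := by
        rw [mul_add]
        gcongr
  · calc q ^ (1 / p) * t + √q * v ≤ q ^ (1 / p) * (q ^ (1 / 2 - 1 / p) * u) + √q * v := by
          gcongr
      _ = √q * (u + v) := by
        rw [← mul_assoc, ← rpow_add (by linarith), sqrt_eq_rpow]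
        ring_nf
      _ ≤ √(2 * q) := by
        rw [sqrt_mul' 2 (by linarith), mul_comm]
        gcongr

theorem stmt15_general (p : ℝ) (hp : 2 < p) (n q : ℕ) (hq : 1 ≤ q) (hqn : q ≤ n)
    (a : Fin n → ℝ) (hnn : ∀ i, 0 ≤ a i)
    (hnorm : ∑ i, a i ^ 2 = 1) :
    (q : ℝ) ^ (1 / p) ≤
      (q : ℝ) ^ (1 / p) *
          (∑ i ∈ Finset.univ.filter (fun i : Fin n => (i : ℕ) < q), a i ^ (p / (p - 1)))
            ^ ((p - 1) / p)
        + Real.sqrt q *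
          Real.sqrt (∑ i ∈ Finset.univ.filter (fun i : Fin n => q ≤ (i : ℕ)), a i ^ 2) ∧
    (q : ℝ) ^ (1 / p) *
          (∑ i ∈ Finset.univ.filter (fun i : Fin n => (i : ℕ) < q), a i ^ (p / (p - 1)))
            ^ ((p - 1) / p)
        + Real.sqrt q *
          Real.sqrt (∑ i ∈ Finset.univ.filter (fun i : Fin n => q ≤ (i : ℕ)), a i ^ 2)
      ≤ Real.sqrt (2 * q) * ((n : ℝ) / q) ^ (1 / 2 - 1 / p) := by
  set A := univ.filter fun i : Fin n => (i : ℕ) < q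
  set B := univ.filter fun i : Fin n => q ≤ (i : ℕ)
  have hcard : #A = q := by simp [A, Fin.card_filter_val_lt, hqn]
  have hsplit : (∑ i ∈ A, a i ^ 2) + ∑ i ∈ B, a i ^ 2 = 1 := by
    simpa [A, B, not_lt] using (sum_filter_add_sum_filter_not univ (fun i : Fin n => (i : ℕ) < q)
      fun i => a i ^ 2).trans hnorm
  have hr0 : 0 < p / (p - 1) := by apply div_pos <;> linarith
  have hr2 : p / (p - 1) ≤ 2 := by rw [div_le_iff₀ (by linarith)]; linarith
  have hexp : (p - 1) / p - 1 / 2 = 1 / 2 - 1 / p := by field_simp; ring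
  have hlower := Real.Lq_le_Lp_of_le A (fun i _ => hnn i) hr0 hr2
  have hupper := Real.Lp_le_card_rpow_mul_Lq A (fun i _ => hnn i) hr0 hr2
  simp only [rpow_two, ← sqrt_eq_rpow, hcard, one_div_div, hexp] at hlower hupper
  have huv : √(∑ i ∈ A, a i ^ 2) ^ 2 + √(∑ i ∈ B, a i ^ 2) ^ 2 = 1 := by
    rw [sq_sqrt (by positivity), sq_sqrt (by positivity), hsplit]
  obtain ⟨hge, hle⟩ := rpow_mul_add_sqrt_mul_bounds hp.le (Nat.one_le_cast.2 hq)
    (sqrt_nonneg _) (sqrt_nonneg _) huv hlower hupper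
  refine ⟨hge, hle.trans (le_mul_of_one_le_right (sqrt_nonneg _) (one_le_rpow ?_ ?_))⟩
  · rw [one_le_div (by exact_mod_cast hq)]
    exact_mod_cast hqn
  · rw [sub_nonneg]
    gcongr

theorem stmt15 (p : ℝ) (hp : 2 < p) (n q : ℕ) (hq : 1 ≤ q) (hqn : q ≤ n)
    (a : Fin n → ℝ) (hmono : ∀ i j : Fin n, i ≤ j → a j ≤ a i) (hnn : ∀ i, 0 ≤ a i)
    (hnorm : ∑ i, a i ^ 2 = 1) :
    (q : ℝ) ^ (1 / p) ≤
      (q : ℝ) ^ (1 / p) *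
          (∑ i ∈ Finset.univ.filter (fun i : Fin n => (i : ℕ) < q), a i ^ (p / (p - 1)))
            ^ ((p - 1) / p)
        + Real.sqrt q *
          Real.sqrt (∑ i ∈ Finset.univ.filter (fun i : Fin n => q ≤ (i : ℕ)), a i ^ 2) ∧
    (q : ℝ) ^ (1 / p) *
          (∑ i ∈ Finset.univ.filter (fun i : Fin n => (i : ℕ) < q), a i ^ (p / (p - 1)))
            ^ ((p - 1) / p)
        + Real.sqrt q *
          Real.sqrt (∑ i ∈ Finset.univ.filter (fun i : Fin n => q ≤ (i : ℕ)), a i ^ 2)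
      ≤ Real.sqrt (2 * q) * ((n : ℝ) / q) ^ (1 / 2 - 1 / p) :=
  stmt15_general p hp n q hq hqn a hnn hnorm
end

section
/- Let λ > 0 and 0 < p < q < ∞. Define α(p,λ) = 2∫_0^∞ e^{-λ t^p - t^2} dt. Then α(p, λ/Γ((p+1)/2)) < α(q, λ/Γ((q+1)/2)). -/
/-!
Write `u = a t^p` and `v = b t^q` with `a = λ / Γ((p+1)/2)`, `b = λ / Γ((q+1)/2)`, and weight
`w = e^{-t^2}` on `(0, ∞)`. Since `∫ t^r e^{-t^2} = Γ((r+1)/2) / 2`, both `u` and `v` have the same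
`w`-mean `λ / 2`, and `u - v` changes sign exactly once, at the point `t₀` where `u = v = m`:
`u > v` before `t₀`, `u < v` after it. The tangent line of the convex function `e^{-x}` at `x = u`,
together with `e^{-u} ≷ e^{-m}` on the two sides of `t₀`, gives `e^{-v} - e^{-u} > e^{-m} (u - v)`
pointwise; integrated against `w`, the right-hand side vanishes because the means agree.
-/

open MeasureTheory Real Set

lemma exp_neg_mul_sub_lt_exp_neg_sub_exp_neg {x y m : ℝ} (h : 0 < (x - y) * (m - x)) :
    exp (-m) * (x - y) < exp (-y) - exp (-x) := by
  have tangent : exp (-x) * (x - y) ≤ exp (-y) - exp (-x) := by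
    have hexp : exp (-x) * exp (x - y) = exp (-y) := by rw [← exp_add]; ring_nf
    nlinarith [add_one_le_exp (x - y), exp_pos (-x)]
  have hgap : 0 < (exp (-x) - exp (-m)) * (x - y) := by
    rcases pos_and_pos_or_neg_and_neg_of_mul_pos h with ⟨hxy, hmx⟩ | ⟨hxy, hmx⟩
    · exact mul_pos (sub_pos.2 (exp_lt_exp.2 (by linarith))) hxy
    · exact mul_pos_of_neg_of_neg (sub_neg.2 (exp_lt_exp.2 (by linarith))) hxy
  linarith

theorem MeasureTheory.integral_pos_of_ae_pos {α : Type*} [MeasurableSpace α] {μ : Measure α}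
    [NeZero μ] {f : α → ℝ} (hf : ∀ᵐ x ∂μ, 0 < f x) (hfi : Integrable f μ) :
    0 < ∫ x, f x ∂μ := by
  rw [integral_pos_iff_support_of_nonneg_ae (hf.mono fun _ hx => hx.le) hfi, pos_iff_ne_zero]
  intro hsupp
  have hzero : ∀ᵐ x ∂μ, f x = 0 := by
    simpa [Function.support] using measure_eq_zero_iff_ae_notMem.1 hsupp
  obtain ⟨x, hx, hx'⟩ := (hf.and hzero).exists
  exact hx.ne' hx'

/-- `0 < (u - v) (m - u)` says that `u` lies strictly between `v` and `m`. -/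
theorem integral_exp_neg_mul_lt_of_crossing {α : Type*} [MeasurableSpace α] {μ : Measure α}
    [NeZero μ] {u v w : α → ℝ} (m : ℝ) (hw : ∀ᵐ x ∂μ, 0 < w x)
    (hcross : ∀ᵐ x ∂μ, 0 < (u x - v x) * (m - u x))
    (hu : Integrable (fun x => u x * w x) μ) (hv : Integrable (fun x => v x * w x) μ)
    (heu : Integrable (fun x => exp (-u x) * w x) μ)
    (hev : Integrable (fun x => exp (-v x) * w x) μ)
    (hmean : ∫ x, u x * w x ∂μ = ∫ x, v x * w x ∂μ) :
    ∫ x, exp (-u x) * w x ∂μ < ∫ x, exp (-v x) * w x ∂μ := by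
  have hgap : Integrable (fun x => exp (-v x) * w x - exp (-u x) * w x) μ := hev.sub heu
  have hdiff : Integrable (fun x => exp (-m) * (u x * w x - v x * w x)) μ :=
    (hu.sub hv).const_mul _
  have hpos : 0 < ∫ x, exp (-v x) * w x - exp (-u x) * w x -
      exp (-m) * (u x * w x - v x * w x) ∂μ := by
    refine integral_pos_of_ae_pos ?_ (hgap.sub hdiff)
    filter_upwards [hw, hcross] with x hwx hx
    have hpt := exp_neg_mul_sub_lt_exp_neg_sub_exp_neg hx
    calc 0 < (exp (-v x) - exp (-u x) - exp (-m) * (u x - v x)) * w x :=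
          mul_pos (by linarith) hwx
      _ = _ := by ring
  rw [integral_sub hgap hdiff, integral_sub hev heu,
    integral_const_mul, integral_sub hu hv, hmean, sub_self, mul_zero, sub_zero] at hpos
  linarith

theorem integral_rpow_mul_exp_neg_sq {r : ℝ} (hr : -1 < r) :
    ∫ t in Ioi (0 : ℝ), t ^ r * exp (-t ^ 2) = Gamma ((r + 1) / 2) / 2 := by
  have h := integral_rpow_mul_exp_neg_rpow two_pos hr
  simp only [rpow_two] at h
  rw [h]
  ring

theorem integral_div_gamma_mul_rpow_mul_exp_neg_sq (c : ℝ) {r : ℝ} (hr : -1 < r) :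
    ∫ t in Ioi (0 : ℝ), c / Gamma ((r + 1) / 2) * t ^ r * exp (-t ^ 2) = c / 2 := by
  have hΓ : Gamma ((r + 1) / 2) ≠ 0 := (Gamma_pos_of_pos (by linarith)).ne'
  simp_rw [mul_assoc]
  rw [integral_const_mul, integral_rpow_mul_exp_neg_sq hr]
  field_simp

theorem integrableOn_exp_neg_mul_rpow_mul_exp_neg_sq {c : ℝ} (hc : 0 ≤ c) (r : ℝ) :
    IntegrableOn (fun t => exp (-(c * t ^ r)) * exp (-t ^ 2)) (Ioi 0) := by
  have hgauss : IntegrableOn (fun t : ℝ => exp (-t ^ 2)) (Ioi 0) := by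
    simpa using (integrable_exp_neg_mul_sq one_pos).integrableOn
  refine hgauss.bdd_mul (c := 1) (by fun_prop) ?_
  filter_upwards [ae_restrict_mem measurableSet_Ioi] with t ht
  rw [norm_of_nonneg (exp_pos _).le, exp_le_one_iff, neg_nonpos]
  exact mul_nonneg hc (rpow_nonneg (le_of_lt ht) r)

lemma sub_rpow_mul_sub_rpow_pos {s t r k : ℝ} (hs : 0 ≤ s) (ht : 0 ≤ t) (hst : s ≠ t)
    (hr : 0 < r) (hk : 0 < k) : 0 < (s ^ r - t ^ r) * (s ^ k - t ^ k) := by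
  rcases hst.lt_or_gt with h | h
  · exact mul_pos_of_neg_of_neg (sub_neg.2 (rpow_lt_rpow hs h hr))
      (sub_neg.2 (rpow_lt_rpow hs h hk))
  · exact mul_pos (sub_pos.2 (rpow_lt_rpow ht h hr)) (sub_pos.2 (rpow_lt_rpow ht h hk))

theorem exists_mul_rpow_crossing {a b p q : ℝ} (ha : 0 < a) (hb : 0 < b) (hp : 0 < p)
    (hpq : p < q) : ∃ t₀ m : ℝ, ∀ t > 0, t ≠ t₀ →
      0 < (a * t ^ p - b * t ^ q) * (m - a * t ^ p) := by
  have hqp : 0 < q - p := sub_pos.2 hpq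
  set t₀ := (a / b) ^ (q - p)⁻¹
  have ht₀ : 0 < t₀ := rpow_pos_of_pos (div_pos ha hb) _
  have hcross : t₀ ^ (q - p) = a / b := by
    rw [← rpow_mul (div_pos ha hb).le, inv_mul_cancel₀ hqp.ne', rpow_one]
  refine ⟨t₀, a * t₀ ^ p, fun t ht htt₀ => ?_⟩
  have hdiff : a * t ^ p - b * t ^ q = b * t ^ p * (t₀ ^ (q - p) - t ^ (q - p)) := by
    rw [hcross, rpow_sub ht]
    field_simp
  have hsign := sub_rpow_mul_sub_rpow_pos ht₀.le ht.le (Ne.symm htt₀) hqp hp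
  calc 0 < a * b * t ^ p * ((t₀ ^ (q - p) - t ^ (q - p)) * (t₀ ^ p - t ^ p)) :=
        mul_pos (by positivity) hsign
    _ = _ := by rw [hdiff]; ring

theorem stmt17 (lam p q : ℝ) (hlam : 0 < lam) (hp : 0 < p) (hpq : p < q) :
    2 * ∫ t in Set.Ioi (0 : ℝ),
        Real.exp (-(lam / Real.Gamma ((p + 1) / 2)) * t ^ p - t ^ 2) <
    2 * ∫ t in Set.Ioi (0 : ℝ),
        Real.exp (-(lam / Real.Gamma ((q + 1) / 2)) * t ^ q - t ^ 2) := by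
  have hq : 0 < q := hp.trans hpq
  set a := lam / Gamma ((p + 1) / 2)
  set b := lam / Gamma ((q + 1) / 2)
  have ha : 0 < a := div_pos hlam (Gamma_pos_of_pos (by linarith))
  have hb : 0 < b := div_pos hlam (Gamma_pos_of_pos (by linarith))
  obtain ⟨t₀, m, hcross⟩ := exists_mul_rpow_crossing ha hb hp hpq
  have hsplit (c r t : ℝ) : exp (-c * t ^ r - t ^ 2) = exp (-(c * t ^ r)) * exp (-t ^ 2) := by
    rw [← exp_add, neg_mul, sub_eq_add_neg]
  have : NeZero (volume.restrict (Ioi (0 : ℝ))) := ⟨by simp⟩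
  have hmoment (r : ℝ) (hr : 0 < r) :
      Integrable (fun t => lam / Gamma ((r + 1) / 2) * t ^ r * exp (-t ^ 2))
        (volume.restrict (Ioi 0)) :=
    ((integrableOn_rpow_mul_exp_neg_mul_sq one_pos (by linarith : -1 < r)).const_mul
      (lam / Gamma ((r + 1) / 2))).congr
      (ae_of_all _ fun t => by simp [mul_assoc])
  simp_rw [hsplit]
  gcongr 2 * ?_
  refine integral_exp_neg_mul_lt_of_crossing m (ae_of_all _ fun t => exp_pos _) ?_
    (hmoment p hp) (hmoment q hq) (integrableOn_exp_neg_mul_rpow_mul_exp_neg_sq ha.le p)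
    (integrableOn_exp_neg_mul_rpow_mul_exp_neg_sq hb.le q) ?_
  · filter_upwards [ae_restrict_mem measurableSet_Ioi,
      ae_restrict_of_ae (Measure.ae_ne volume t₀)] with t ht htt₀
    exact hcross t ht htt₀
  · rw [integral_div_gamma_mul_rpow_mul_exp_neg_sq lam (by linarith),
      integral_div_gamma_mul_rpow_mul_exp_neg_sq lam (by linarith)]
end

section
/- Let 1 ≤ p ≤ 2 and let g have density t ↦ e^{-|t|^p}/(2Γ(1+1/p)). Then for every q ≥ 1, (E|g|^q)^{1/q} ≤ C q^{1/p} for an absolute constant C (independent of p, q); more precisely (E|g|^q)^{1/q} = [Γ((q+1)/p+1)/((q+1)Γ(1/p+1))]^{1/q} ≤ C q^{1/p}. -/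
/-!
Folding the symmetric integral onto `(0, ∞)` and substituting `u = t ^ p` turns the `q`-th
moment into a ratio of Gamma values. For the bound put `x = (q + 1) / p + 1 ∈ [2, 3q]`: comparing
with the factorial at `⌈x⌉` gives `Γ x ≤ x ^ x`, while `Γ ≥ e⁻¹` on `[1, ∞)` controls the
denominator. After taking `q`-th roots, `x / q ≤ 1 / p + 2 / q` and `(3q) ^ (2 / q) ≤ e ^ 6`.
-/

open Real MeasureTheory Set

namespace Real

lemma exp_neg_one_le_Gamma {s : ℝ} (hs : 1 ≤ s) : exp (-1) ≤ Gamma s := by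
  have hint : IntegrableOn (fun x ↦ exp (-x) * x ^ (s - 1)) (Ioi 0) :=
    GammaIntegral_convergent (by linarith)
  rw [Gamma_eq_integral (by linarith), ← integral_exp_neg_Ioi 1]
  calc ∫ x in Ioi 1, exp (-x)
      ≤ ∫ x in Ioi 1, exp (-x) * x ^ (s - 1) := by
        refine setIntegral_mono_on (by simpa using exp_neg_integrableOn_Ioi 1 one_pos)
          (hint.mono_set (Ioi_subset_Ioi zero_le_one)) measurableSet_Ioi fun x hx ↦ ?_
        exact le_mul_of_one_le_right (exp_pos _).le (one_le_rpow (le_of_lt hx) (by linarith))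
    _ ≤ ∫ x in Ioi 0, exp (-x) * x ^ (s - 1) := by
        refine setIntegral_mono_set hint ?_ (Ioi_subset_Ioi zero_le_one).eventuallyLE
        filter_upwards [ae_restrict_mem measurableSet_Ioi] with x (hx : 0 < x)
        positivity

lemma Gamma_le_rpow_self {x : ℝ} (hx : 2 ≤ x) : Gamma x ≤ x ^ x := by
  obtain ⟨n, hn⟩ : ∃ n : ℕ, ⌈x⌉₊ = n + 1 :=
    Nat.exists_eq_add_one.mpr (Nat.ceil_pos.mpr (by linarith))
  have hxn : x ≤ n + 1 := by exact_mod_cast hn ▸ Nat.le_ceil x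
  have hnx : (n : ℝ) ≤ x := by
    have := Nat.ceil_lt_add_one (by linarith : 0 ≤ x)
    rw [hn] at this
    push_cast at this
    linarith
  calc Gamma x ≤ Gamma (n + 1) :=
        Gamma_strictMonoOn_Ici.monotoneOn hx (by simp only [mem_Ici]; linarith) hxn
    _ = n.factorial := Gamma_nat_eq_factorial n
    _ ≤ (n : ℝ) ^ n := by exact_mod_cast Nat.factorial_le_pow n
    _ = (n : ℝ) ^ (n : ℝ) := (rpow_natCast _ _).symm
    _ ≤ x ^ (n : ℝ) := rpow_le_rpow (Nat.cast_nonneg n) hnx (Nat.cast_nonneg n)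
    _ ≤ x ^ x := rpow_le_rpow_of_exponent_le (by linarith) hnx

lemma rpow_le_exp_mul {y a : ℝ} (hy : 0 < y) (ha : 0 ≤ a) : y ^ a ≤ exp (a * y) := by
  rw [rpow_def_of_pos hy, mul_comm a]
  exact exp_le_exp.mpr <| mul_le_mul_of_nonneg_right
    ((log_le_sub_one_of_pos hy).trans (by linarith)) ha

end Real

lemma integral_abs_rpow_mul_exp_neg_abs_rpow {p q : ℝ} (hp : 0 < p) (hq : -1 < q) :
    ∫ t : ℝ, |t| ^ q * exp (-|t| ^ p) = 2 * Gamma ((q + 1) / p + 1) / (q + 1) := by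
  have hq1 : 0 < q + 1 := by linarith
  rw [integral_comp_abs (f := fun t ↦ t ^ q * exp (-t ^ p)),
    integral_rpow_mul_exp_neg_rpow hp hq, Gamma_add_one (by positivity)]
  field_simp

lemma Gamma_moment_ratio_le {p q : ℝ} (hp : 1 ≤ p) (hp2 : p ≤ 2) (hq : 1 ≤ q) :
    Gamma ((q + 1) / p + 1) / ((q + 1) * Gamma (1 / p + 1)) ≤
      exp 1 * (3 * q) ^ ((q + 1) / p + 1) := by
  set x := (q + 1) / p + 1
  have hp0 : 0 < p := by linarith
  have hx2 : 2 ≤ x := by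
    have : 1 ≤ (q + 1) / p := (one_le_div hp0).mpr (by linarith)
    linarith
  have hx3q : x ≤ 3 * q := by
    have : (q + 1) / p ≤ q + 1 := div_le_self (by linarith) hp
    linarith
  have hΓ : exp (-1) ≤ Gamma (1 / p + 1) :=
    exp_neg_one_le_Gamma (le_add_of_nonneg_left (by positivity))
  have hden : exp (-1) ≤ (q + 1) * Gamma (1 / p + 1) :=
    hΓ.trans (le_mul_of_one_le_left ((exp_pos _).le.trans hΓ) (by linarith))
  rw [div_le_iff₀ ((exp_pos _).trans_le hden)]
  calc Gamma x ≤ x ^ x := Gamma_le_rpow_self hx2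
    _ ≤ (3 * q) ^ x := rpow_le_rpow (by linarith) hx3q (by linarith)
    _ = exp 1 * (3 * q) ^ x * exp (-1) := by
        rw [mul_right_comm, ← exp_add, add_neg_cancel, exp_zero, one_mul]
    _ ≤ exp 1 * (3 * q) ^ x * ((q + 1) * Gamma (1 / p + 1)) := by gcongr

lemma Gamma_moment_ratio_rpow_le {p q : ℝ} (hp : 1 ≤ p) (hp2 : p ≤ 2) (hq : 1 ≤ q) :
    (Gamma ((q + 1) / p + 1) / ((q + 1) * Gamma (1 / p + 1))) ^ (1 / q) ≤
      3 * exp 7 * q ^ (1 / p) := by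
  set x := (q + 1) / p + 1
  have hp0 : 0 < p := by linarith
  have hq0 : 0 < q := by linarith
  have hexponent : x * (1 / q) ≤ 1 / p + 2 / q := by
    have : 1 / (p * q) ≤ 1 / q := one_div_le_one_div_of_le hq0 (by nlinarith)
    have htwo : 2 / q = 1 / q + 1 / q := by ring
    calc x * (1 / q) = 1 / p + 1 / (p * q) + 1 / q := by simp only [x]; field_simp
      _ ≤ 1 / p + 2 / q := by linarith
  have h3q : (3 * q) ^ (1 / p) ≤ 3 * q ^ (1 / p) := by
    rw [mul_rpow (by norm_num) hq0.le]
    gcongr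
    exact rpow_le_self_of_one_le (by norm_num) (by rw [div_le_one hp0]; exact hp)
  have h6 : (3 * q) ^ (2 / q) ≤ exp 6 := by
    convert rpow_le_exp_mul (by positivity : 0 < 3 * q) (by positivity : 0 ≤ 2 / q) using 2
    field_simp
    norm_num
  have hratio : 0 ≤ Gamma x / ((q + 1) * Gamma (1 / p + 1)) := by
    have := Gamma_pos_of_pos (by positivity : 0 < x)
    have := Gamma_pos_of_pos (by positivity : 0 < 1 / p + 1)
    positivity
  calc (Gamma x / ((q + 1) * Gamma (1 / p + 1))) ^ (1 / q)
      ≤ (exp 1 * (3 * q) ^ x) ^ (1 / q) :=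
        rpow_le_rpow hratio (Gamma_moment_ratio_le hp hp2 hq) (by positivity)
    _ = exp (1 / q) * (3 * q) ^ (x * (1 / q)) := by
        rw [mul_rpow (exp_pos 1).le (by positivity), exp_one_rpow, ← rpow_mul (by positivity)]
    _ ≤ exp 1 * ((3 * q) ^ (1 / p) * (3 * q) ^ (2 / q)) := by
        rw [← rpow_add (by positivity)]
        gcongr
        · rw [div_le_one hq0]; exact hq
        · linarith
    _ ≤ exp 1 * (3 * q ^ (1 / p) * exp 6) := by gcongr
    _ = 3 * exp 7 * q ^ (1 / p) := by
        rw [show (7 : ℝ) = 1 + 6 by norm_num, exp_add]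
        ring

theorem stmt19 :
    ∃ C : ℝ, 0 < C ∧ ∀ p q : ℝ, 1 ≤ p → p ≤ 2 → 1 ≤ q →
      (∫ t : ℝ, |t| ^ q * (Real.exp (-|t| ^ p) / (2 * Real.Gamma (1 + 1 / p)))) ^ (1 / q) =
        (Real.Gamma ((q + 1) / p + 1) / ((q + 1) * Real.Gamma (1 / p + 1))) ^ (1 / q) ∧
      (Real.Gamma ((q + 1) / p + 1) / ((q + 1) * Real.Gamma (1 / p + 1))) ^ (1 / q) ≤
        C * q ^ (1 / p) := by
  refine ⟨3 * exp 7, by positivity, fun p q hp hp2 hq ↦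
    ⟨?_, Gamma_moment_ratio_rpow_le hp hp2 hq⟩⟩
  have hp0 : 0 < p := by linarith
  have hΓ : 0 < Gamma (1 / p + 1) := Gamma_pos_of_pos (by positivity)
  simp_rw [mul_div_assoc']
  rw [integral_div, integral_abs_rpow_mul_exp_neg_abs_rpow hp0 (by linarith), add_comm 1 (1 / p)]
  field_simp
end
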